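/- arXiv:1201.6132 — 5 statements merged into one kernel-verified Lean document; each statement's English description precedes it below -/
import Mathlib

section
/- Let hₙ, h : Ω → ℝ be measurable with hₙ ≥ λ > 0 and h ≥ λ a.e., and suppose αₙ := ‖h - hₙ‖_{L^∞(Ω)} → 0. Then for any v ∈ W^{1,∞}₀(Ω) with |∇v| ≤ h a.e., the functions vₙ = (λ/(λ+αₙ)) v satisfy |∇vₙ| ≤ hₙ a.e. and vₙ → v strongly in W^{1,∞}(Ω). -/
open MeasureTheory Filter Set Topology
open scoped ENNReal NNReal

/-!
Writing `αₙ` for `‖h - hₙ‖_∞`, a.e. `|∇v| ≤ h ≤ hₙ + αₙ`, and since `λ ≤ hₙ`,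
`λ (hₙ + αₙ) ≤ (λ + αₙ) hₙ`; this gives `|∇vₙ| ≤ hₙ`. Strong convergence holds because
`vₙ - v = (λ/(λ+αₙ) - 1) v` and the scalar tends to `0`.
-/

section

variable {α E : Type*} [MeasurableSpace α] {μ : Measure α}

theorem ae_norm_le_toReal_eLpNorm_top [NormedAddCommGroup E] {f : α → E}
    (hf : eLpNorm f ∞ μ ≠ ∞) : ∀ᵐ x ∂μ, ‖f x‖ ≤ (eLpNorm f ∞ μ).toReal := by
  filter_upwards [ae_le_eLpNormEssSup (f := f) (μ := μ)] with x hx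
  rw [← ENNReal.ofReal_le_iff_le_toReal hf, ofReal_norm, eLpNorm_exponent_top]
  exact hx

theorem tendsto_eLpNorm_smul_sub_self {ι 𝕜 : Type*} [NormedField 𝕜] [NormedAddCommGroup E]
    [NormedSpace 𝕜 E] {l : Filter ι} {c : ι → 𝕜} (hc : Tendsto c l (𝓝 1)) {f : α → E}
    {p : ℝ≥0∞} (hf : eLpNorm f p μ ≠ ∞) :
    Tendsto (fun i => eLpNorm (fun x => c i • f x - f x) p μ) l (𝓝 0) := by
  have hsmul : ∀ i, (fun x => c i • f x - f x) = (c i - 1) • f := fun i => by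
    funext x; simp [sub_smul]
  have hscalar : Tendsto (fun i => ‖c i - 1‖ₑ) l (𝓝 0) := by
    simpa [Function.comp_def] using (continuous_enorm.tendsto _).comp (hc.sub_const 1)
  simp_rw [hsmul, eLpNorm_const_smul]
  simpa using ENNReal.Tendsto.mul_const hscalar (Or.inr hf)

end

theorem div_add_mul_le_of_le_add {lam k a g : ℝ} (hlam : 0 < lam) (ha : 0 ≤ a) (hk : lam ≤ k)
    (hg : g ≤ k + a) : lam / (lam + a) * g ≤ k := by
  have hpos : 0 < lam + a := by linarith
  calc lam / (lam + a) * g ≤ lam / (lam + a) * (k + a) := by gcongr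
    _ ≤ k := by
      rw [div_mul_eq_mul_div, div_le_iff₀ hpos]
      linarith [mul_le_mul_of_nonneg_right hk ha]

theorem tendsto_div_add_of_tendsto_zero {ι : Type*} {l : Filter ι} {lam : ℝ} (hlam : lam ≠ 0)
    {a : ι → ℝ} (ha : Tendsto a l (𝓝 0)) : Tendsto (fun i => lam / (lam + a i)) l (𝓝 1) := by
  have hlim := (tendsto_const_nhds (x := lam)).div (tendsto_const_nhds.add ha)
    (by rwa [add_zero])
  rwa [add_zero, div_self hlam] at hlim

theorem stmt1_general {α : Type*} [MeasurableSpace α] (μ : Measure α) {N : ℕ}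
    (lam : ℝ) (hlam : 0 < lam)
    (h : α → ℝ) (hn : ℕ → α → ℝ)
    (hnge : ∀ n, ∀ᵐ x ∂μ, lam ≤ hn n x)
    (a : ℕ → ℝ) (ha : ∀ n, a n = (eLpNorm (fun x => h x - hn n x) ⊤ μ).toReal)
    (hafin : ∀ n, eLpNorm (fun x => h x - hn n x) ⊤ μ ≠ ⊤)
    (ha0 : Filter.Tendsto a Filter.atTop (𝓝 0))
    (v : α → ℝ) (gv : α → EuclideanSpace ℝ (Fin N))
    (hvbd : eLpNorm v ⊤ μ ≠ ⊤) (hgvbd : eLpNorm gv ⊤ μ ≠ ⊤)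
    (hv : ∀ᵐ x ∂μ, ‖gv x‖ ≤ h x) :
    (∀ n, ∀ᵐ x ∂μ, ‖(lam / (lam + a n)) • gv x‖ ≤ hn n x) ∧
    Filter.Tendsto
      (fun n => eLpNorm (fun x => (lam / (lam + a n)) * v x - v x) ⊤ μ
        + eLpNorm (fun x => (lam / (lam + a n)) • gv x - gv x) ⊤ μ)
      Filter.atTop (𝓝 0) := by
  have ha_nonneg : ∀ n, 0 ≤ a n := fun n => ha n ▸ ENNReal.toReal_nonneg
  have hc := tendsto_div_add_of_tendsto_zero hlam.ne' ha0
  refine ⟨fun n => ?_, by simpa using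
    (tendsto_eLpNorm_smul_sub_self hc hvbd).add (tendsto_eLpNorm_smul_sub_self hc hgvbd)⟩
  filter_upwards [hv, hnge n, ae_norm_le_toReal_eLpNorm_top (hafin n)] with x hgx hnx hdiff
  rw [← ha n, Real.norm_eq_abs] at hdiff
  rw [norm_smul, Real.norm_of_nonneg (by have := ha_nonneg n; positivity)]
  exact div_add_mul_le_of_le_add hlam (ha_nonneg n) hnx (by linarith [le_abs_self (h x - hn n x)])

/-- key approximation lemma. If `hₙ → h` in `L^∞`, `hₙ, h ≥ λ > 0`, and
`|∇v| ≤ h` a.e., then `vₙ = (λ/(λ+αₙ)) v` (`αₙ = ‖h - hₙ‖_∞`) satisfies `|∇vₙ| ≤ hₙ`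
a.e. and `vₙ → v` strongly in `W^{1,∞}`, i.e. both `vₙ → v` and `∇vₙ → ∇v` in `L^∞`.
The function `v` and its gradient `gv` are bounded (`v ∈ W^{1,∞}₀(Ω)`, Ω bounded). -/
theorem stmt1 {α : Type*} [MeasurableSpace α] (μ : Measure α) {N : ℕ}
    (lam : ℝ) (hlam : 0 < lam)
    (h : α → ℝ) (hn : ℕ → α → ℝ)
    (hmeas : Measurable h) (hnmeas : ∀ n, Measurable (hn n))
    (hge : ∀ᵐ x ∂μ, lam ≤ h x) (hnge : ∀ n, ∀ᵐ x ∂μ, lam ≤ hn n x)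
    (a : ℕ → ℝ) (ha : ∀ n, a n = (eLpNorm (fun x => h x - hn n x) ⊤ μ).toReal)
    (hafin : ∀ n, eLpNorm (fun x => h x - hn n x) ⊤ μ ≠ ⊤)
    (ha0 : Filter.Tendsto a Filter.atTop (𝓝 0))
    (v : α → ℝ) (gv : α → EuclideanSpace ℝ (Fin N))
    (hvbd : eLpNorm v ⊤ μ ≠ ⊤) (hgvbd : eLpNorm gv ⊤ μ ≠ ⊤)
    (hv : ∀ᵐ x ∂μ, ‖gv x‖ ≤ h x) :
    (∀ n, ∀ᵐ x ∂μ, ‖(lam / (lam + a n)) • gv x‖ ≤ hn n x) ∧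
    Filter.Tendsto
      (fun n => eLpNorm (fun x => (lam / (lam + a n)) * v x - v x) ⊤ μ
        + eLpNorm (fun x => (lam / (lam + a n)) • gv x - gv x) ⊤ μ)
      Filter.atTop (𝓝 0) :=
  stmt1_general μ lam hlam h hn hnge a ha hafin ha0 v gv hvbd hgvbd hv
end

section
/- Let μ > 0 and let ν, ξ : [0,∞) → [0,∞) with ν absolutely continuous, satisfying e^{μt} ν(t) ≤ e^{μs} ν(s) + ∫_s^t e^{μτ} ξ(τ) dτ for all 0 ≤ s < t. Then for all t > 0 and σ ≥ 0, ν(t+σ) ≤ e^{-μt} ν(σ) + C_μ · sup_{σ < s < t+σ} ∫_s^{s+1} ξ(τ) dτ, where C_μ = (1 - e^{-μ})^{-1} + 1. -/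
/-!
Multiplying the hypothesis by `e^{-μ(t+σ)}` bounds `ν(t+σ)` by `e^{-μt} ν(σ)` plus the integral of
`e^{-μ(t+σ-τ)} ξ(τ)` over `[σ, t+σ]`. Cut this interval, from the right end, into `⌊t⌋` unit
windows and a leftover piece of length `< 1`. On the `i`-th window from the right the kernel is at
most `e^{-μi}`, so these windows contribute at most a geometric series times the sliding
supremum `M`; the leftover piece contributes at most `∫_σ^{σ+1} ξ`, which is `≤ M` by continuity
of `s ↦ ∫_s^{s+1} ξ`.
-/

open Real Set MeasureTheory intervalIntegral

theorem ContinuousWithinAt.le_csSup_image {α β : Type*} [TopologicalSpace α]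
    [ConditionallyCompleteLattice β] [TopologicalSpace β] [ClosedIicTopology β]
    {f : α → β} {s : Set α} {x : α} (hf : ContinuousWithinAt f s x) (hx : x ∈ closure s)
    (hbdd : BddAbove (f '' s)) : f x ≤ sSup (f '' s) := by
  have hub : sSup (f '' s) ∈ upperBounds (closure (f '' s)) := by
    rw [upperBounds_closure]
    exact fun _ hy => le_csSup hbdd hy
  exact hub (hf.mem_closure_image hx)

theorem le_exp_neg_mul_add_integral_of_exp_mul_le {μ s t x y : ℝ} {ξ : ℝ → ℝ}
    (h : exp (μ * t) * y ≤ exp (μ * s) * x + ∫ τ in s..t, exp (μ * τ) * ξ τ) :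
    y ≤ exp (-μ * (t - s)) * x + ∫ τ in s..t, exp (-μ * (t - τ)) * ξ τ := by
  refine (mul_le_mul_iff_right₀ (exp_pos (μ * t))).mp (h.trans_eq ?_)
  simp_rw [mul_add, ← intervalIntegral.integral_const_mul, ← mul_assoc, ← exp_add]
  ring_nf

section SlidingWindow

variable {ξ : ℝ → ℝ}

theorem continuous_intervalIntegral_add_const (hξint : ∀ a b, IntervalIntegrable ξ volume a b)
    (h : ℝ) :
    Continuous fun s => ∫ τ in s..s + h, ξ τ := by
  have hdiff : (fun s => ∫ τ in s..s + h, ξ τ)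
      = fun s => (∫ τ in 0..s + h, ξ τ) - ∫ τ in 0..s, ξ τ :=
    funext fun s => (integral_interval_sub_left (hξint 0 _) (hξint 0 _)).symm
  rw [hdiff]
  exact ((continuous_primitive hξint 0).comp (continuous_add_const h)).sub
    (continuous_primitive hξint 0)

theorem integral_mul_le_mul_integral {w : ℝ → ℝ} {u v c : ℝ} (huv : u ≤ v)
    (hw : ContinuousOn w (Icc u v)) (hξint : IntervalIntegrable ξ volume u v)
    (hξ : ∀ τ ∈ Icc u v, 0 ≤ ξ τ) (hwc : ∀ τ ∈ Icc u v, w τ ≤ c) :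
    ∫ τ in u..v, w τ * ξ τ ≤ c * ∫ τ in u..v, ξ τ := by
  rw [← intervalIntegral.integral_const_mul]
  refine integral_mono_on huv (hξint.continuousOn_mul (by rwa [uIcc_of_le huv]))
    (hξint.const_mul c) fun τ hτ => mul_le_mul_of_nonneg_right (hwc τ hτ) (hξ τ hτ)

variable {μ b M : ℝ}

theorem exp_neg_mul_sub_le_exp_neg_pow (hμ : 0 ≤ μ) (K : ℕ) {τ : ℝ} (hτ : τ ≤ b - K) :
    exp (-μ * (b - τ)) ≤ exp (-μ) ^ K := by
  rw [← exp_nat_mul, exp_le_exp]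
  nlinarith

theorem integral_exp_mul_le_geom_sum_mul (hμ : 0 ≤ μ)
    (hξint : ∀ a b, IntervalIntegrable ξ volume a b) (K : ℕ)
    (hξ : ∀ τ, b - K ≤ τ → 0 ≤ ξ τ) (hM : ∀ i < K, ∫ τ in b - (i + 1)..b - i, ξ τ ≤ M) :
    ∫ τ in b - K..b, exp (-μ * (b - τ)) * ξ τ ≤ (∑ i ∈ Finset.range K, exp (-μ) ^ i) * M := by
  have hint : ∀ u v, IntervalIntegrable (fun τ => exp (-μ * (b - τ)) * ξ τ) volume u v :=
    fun u v => (hξint u v).continuousOn_mul (by fun_prop)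
  induction K with
  | zero => simp
  | succ K ih =>
    push_cast at hξ hM ⊢
    have hlast : ∫ τ in b - (K + 1)..b - K, exp (-μ * (b - τ)) * ξ τ ≤ exp (-μ) ^ K * M :=
      (integral_mul_le_mul_integral (by linarith) (by fun_prop) (hξint _ _)
        (fun τ hτ => hξ τ hτ.1) fun τ hτ => exp_neg_mul_sub_le_exp_neg_pow hμ K hτ.2).trans
        (mul_le_mul_of_nonneg_left (hM K K.lt_succ_self) (pow_nonneg (exp_pos _).le _))
    have hrest := ih (fun τ hτ => hξ τ (by linarith)) fun i hi => hM i (by omega)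
    rw [← integral_add_adjacent_intervals (hint _ (b - K)) (hint _ _), Finset.sum_range_succ,
      add_mul]
    linarith

theorem integral_exp_mul_le_of_integral_window_le (hμ : 0 < μ) {σ : ℝ} (hσb : σ < b)
    (hξint : ∀ a b, IntervalIntegrable ξ volume a b) (hξ : ∀ τ, σ ≤ τ → 0 ≤ ξ τ)
    (hM : ∀ s ∈ Ico σ b, ∫ τ in s..s + 1, ξ τ ≤ M) :
    ∫ τ in σ..b, exp (-μ * (b - τ)) * ξ τ ≤ ((1 - exp (-μ))⁻¹ + 1) * M := by
  set K := ⌊b - σ⌋₊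
  have hK : (K : ℝ) ≤ b - σ := Nat.floor_le (by linarith)
  have hK' : b - σ < K + 1 := Nat.lt_floor_add_one _
  have hM0 : 0 ≤ M :=
    (integral_nonneg (by linarith) fun τ hτ => hξ τ hτ.1).trans (hM σ ⟨le_rfl, hσb⟩)
  have hint : ∀ u v, IntervalIntegrable (fun τ => exp (-μ * (b - τ)) * ξ τ) volume u v :=
    fun u v => (hξint u v).continuousOn_mul (by fun_prop)
  have hhead : ∫ τ in σ..b - K, exp (-μ * (b - τ)) * ξ τ ≤ M := calc
    _ ≤ 1 * ∫ τ in σ..b - K, ξ τ :=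
      integral_mul_le_mul_integral (by linarith) (by fun_prop) (hξint _ _)
        (fun τ hτ => hξ τ hτ.1) fun τ hτ =>
          (exp_neg_mul_sub_le_exp_neg_pow hμ.le 0 (by push_cast; linarith [hτ.2])).trans_eq
            (pow_zero _)
    _ ≤ ∫ τ in σ..σ + 1, ξ τ := by
      rw [one_mul]
      exact integral_mono_interval le_rfl (by linarith) (by linarith)
        (ae_restrict_of_forall_mem measurableSet_Ioc fun τ hτ => hξ τ hτ.1.le) (hξint _ _)
    _ ≤ M := hM σ ⟨le_rfl, hσb⟩
  have htail := integral_exp_mul_le_geom_sum_mul (b := b) hμ.le hξint K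
    (fun τ hτ => hξ τ (by linarith)) fun i hi => by
      have hi' : (i : ℝ) + 1 ≤ K := by exact_mod_cast hi
      have := hM (b - (i + 1)) ⟨by linarith, by linarith⟩
      rwa [show b - (i + 1) + 1 = b - i by ring] at this
  have hgeom : ∑ i ∈ Finset.range K, exp (-μ) ^ i ≤ (1 - exp (-μ))⁻¹ := by
    rw [Finset.range_eq_Ico]
    simpa using geom_sum_Ico_le_of_lt_one (m := 0) (n := K)
      (exp_pos (-μ)).le (exp_lt_one_iff.mpr (neg_lt_zero.mpr hμ))
  rw [← integral_add_adjacent_intervals (hint σ (b - K)) (hint _ b)]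
  nlinarith [mul_le_mul_of_nonneg_right hgeom hM0]

end SlidingWindow

theorem stmt7_general (μ : ℝ) (hμ : 0 < μ) (ν ξ : ℝ → ℝ)
    (hξ : ∀ t, 0 ≤ t → 0 ≤ ξ t)
    (hξint : ∀ a b : ℝ, IntervalIntegrable ξ MeasureTheory.volume a b)
    (hineq : ∀ s t : ℝ, 0 ≤ s → s < t →
      Real.exp (μ * t) * ν t ≤ Real.exp (μ * s) * ν s
        + ∫ τ in s..t, Real.exp (μ * τ) * ξ τ) :
    ∀ t σ : ℝ, 0 < t → 0 ≤ σ →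
      ν (t + σ) ≤ Real.exp (-μ * t) * ν σ
        + ((1 - Real.exp (-μ))⁻¹ + 1)
          * sSup ((fun s => ∫ τ in s..(s + 1), ξ τ) '' Set.Ioo σ (t + σ)) := by
  intro t σ ht hσ
  have hσb : σ < t + σ := by linarith
  set f := fun s => ∫ τ in s..s + 1, ξ τ
  have hf : Continuous f := continuous_intervalIntegral_add_const hξint 1
  have hbdd : BddAbove (f '' Ioo σ (t + σ)) :=
    (isCompact_Icc.bddAbove_image hf.continuousOn).mono (image_mono Ioo_subset_Icc_self)
  have hwindow : ∀ s ∈ Ico σ (t + σ), f s ≤ sSup (f '' Ioo σ (t + σ)) := by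
    rintro s ⟨hσs, hs⟩
    rcases hσs.eq_or_lt with rfl | hσs
    · exact hf.continuousWithinAt.le_csSup_image (by simp [closure_Ioo hσb.ne, hσb.le]) hbdd
    · exact le_csSup hbdd (mem_image_of_mem f ⟨hσs, hs⟩)
  have hstep := le_exp_neg_mul_add_integral_of_exp_mul_le (hineq σ (t + σ) hσ hσb)
  rw [add_sub_cancel_right] at hstep
  have hkernel := integral_exp_mul_le_of_integral_window_le hμ hσb hξint
    (fun τ hτ => hξ τ (hσ.trans hτ)) hwindow
  linarith

/-- Gronwall-type lemma with sliding averages. If `ν, ξ ≥ 0` on `[0,∞)`,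
`ν` is continuous (absolutely continuous in the paper), `ξ` is locally integrable, and
`e^{μt} ν(t) ≤ e^{μs} ν(s) + ∫_s^t e^{μτ} ξ(τ) dτ` for `0 ≤ s < t`, then for all
`t > 0` and `σ ≥ 0`,
`ν(t+σ) ≤ e^{-μt} ν(σ) + C_μ sup_{σ<s<t+σ} ∫_s^{s+1} ξ`, `C_μ = (1-e^{-μ})⁻¹ + 1`. -/
theorem stmt7 (μ : ℝ) (hμ : 0 < μ) (ν ξ : ℝ → ℝ)
    (hν : ∀ t, 0 ≤ t → 0 ≤ ν t) (hξ : ∀ t, 0 ≤ t → 0 ≤ ξ t)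
    (hνcont : ContinuousOn ν (Set.Ici 0))
    (hξint : ∀ a b : ℝ, IntervalIntegrable ξ MeasureTheory.volume a b)
    (hineq : ∀ s t : ℝ, 0 ≤ s → s < t →
      Real.exp (μ * t) * ν t ≤ Real.exp (μ * s) * ν s
        + ∫ τ in s..t, Real.exp (μ * τ) * ξ τ) :
    ∀ t σ : ℝ, 0 < t → 0 ≤ σ →
      ν (t + σ) ≤ Real.exp (-μ * t) * ν σ
        + ((1 - Real.exp (-μ))⁻¹ + 1)
          * sSup ((fun s => ∫ τ in s..(s + 1), ξ τ) '' Set.Ioo σ (t + σ)) :=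
  stmt7_general μ hμ ν ξ hξ hξint hineq
end

section
/- Let μ > 0, ν, ξ : [0,∞) → [0,∞), with ν(t+σ) ≤ e^{-μt} ν(σ) + C_μ sup_{σ<s<t+σ} ∫_s^{s+1} ξ(τ)dτ for all t>0, σ≥0, where C_μ > 0. Assume sup_{t>0} ∫_t^{t+1} ξ(τ)dτ ≤ C_R and ∫_t^{t+1} ξ(τ)dτ → 0 as t → ∞. Then ν(t) → 0 as t → ∞. -/
open Real Set Filter Topology

/-! Once the forcing term `g` stays below `δ` after time `T`, the estimate started at `σ = T`
gives `ν u ≤ e^{-μ (u - T)} ν T + C δ` for `u > T`; the first term dies out, so `ν` is eventually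
below any `b > C δ`, and `δ` can be taken arbitrarily small. -/

lemma tendsto_exp_neg_mul_sub_atTop {μ : ℝ} (hμ : 0 < μ) (T : ℝ) :
    Tendsto (fun u => exp (-μ * (u - T))) atTop (𝓝 0) :=
  tendsto_exp_atBot.comp <|
    (tendsto_atTop_add_const_right _ (-T) tendsto_id).const_mul_atTop_of_neg (neg_neg_of_pos hμ)

lemma le_exp_mul_add_of_forall_gt {μ C δ T u : ℝ} {ν g : ℝ → ℝ} (hC : 0 ≤ C) (hT : 0 ≤ T)
    (hδ : 0 ≤ δ) (hg : ∀ s, T < s → g s ≤ δ)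
    (hineq : ∀ t σ : ℝ, 0 < t → 0 ≤ σ →
      ν (t + σ) ≤ exp (-μ * t) * ν σ + C * sSup (g '' Ioo σ (t + σ)))
    (hu : T < u) :
    ν u ≤ exp (-μ * (u - T)) * ν T + C * δ := by
  have hsup : sSup (g '' Ioo T u) ≤ δ :=
    Real.sSup_le (by rintro _ ⟨s, hs, rfl⟩; exact hg s hs.1) hδ
  calc ν u = ν ((u - T) + T) := by rw [sub_add_cancel]
    _ ≤ exp (-μ * (u - T)) * ν T + C * sSup (g '' Ioo T (u - T + T)) :=
      hineq _ _ (sub_pos.2 hu) hT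
    _ ≤ exp (-μ * (u - T)) * ν T + C * δ := by rw [sub_add_cancel]; gcongr

theorem tendsto_zero_of_le_exp_mul_add_sSup {μ C : ℝ} {ν g : ℝ → ℝ} (hμ : 0 < μ) (hC : 0 ≤ C)
    (hν : ∀ᶠ t in atTop, 0 ≤ ν t)
    (hineq : ∀ t σ : ℝ, 0 < t → 0 ≤ σ →
      ν (t + σ) ≤ exp (-μ * t) * ν σ + C * sSup (g '' Ioo σ (t + σ)))
    (hg : Tendsto g atTop (𝓝 0)) :
    Tendsto ν atTop (𝓝 0) := by
  refine tendsto_order.2 ⟨fun a ha => hν.mono fun t ht => ha.trans_le ht, fun b hb => ?_⟩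
  obtain ⟨δ, hδ, hCδ⟩ : ∃ δ, 0 < δ ∧ C * δ < b := by
    refine ⟨b / (C + 1), by positivity, ?_⟩
    rw [← mul_div_assoc, div_lt_iff₀ (by linarith)]
    nlinarith
  obtain ⟨T, hT⟩ :=
    eventually_atTop.1 ((eventually_ge_atTop 0).and (hg.eventually (ge_mem_nhds hδ)))
  have hdecay : Tendsto (fun u => exp (-μ * (u - T)) * ν T + C * δ) atTop (𝓝 (C * δ)) := by
    simpa using ((tendsto_exp_neg_mul_sub_atTop hμ T).mul_const (ν T)).add_const (C * δ)
  filter_upwards [hdecay.eventually (gt_mem_nhds hCδ), eventually_gt_atTop T] with u hub hu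
  exact (le_exp_mul_add_of_forall_gt hC (hT T le_rfl).1 hδ.le (fun s hs => (hT s hs.le).2)
    hineq hu).trans_lt hub

theorem stmt8_general (μ Cμ : ℝ) (hμ : 0 < μ) (hCμ : 0 < Cμ) (ν ξ : ℝ → ℝ)
    (hν : ∀ t, 0 ≤ t → 0 ≤ ν t)
    (hineq : ∀ t σ : ℝ, 0 < t → 0 ≤ σ →
      ν (t + σ) ≤ Real.exp (-μ * t) * ν σ
        + Cμ * sSup ((fun s => ∫ τ in s..(s + 1), ξ τ) '' Set.Ioo σ (t + σ)))
    (hto0 : Filter.Tendsto (fun t => ∫ τ in t..(t + 1), ξ τ) Filter.atTop (𝓝 0)) :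
    Filter.Tendsto ν Filter.atTop (𝓝 0) :=
  tendsto_zero_of_le_exp_mul_add_sSup hμ hCμ.le (eventually_atTop.2 ⟨0, hν⟩) hineq hto0

/-- if `ν(t+σ) ≤ e^{-μt} ν(σ) + C_μ sup_{σ<s<t+σ} ∫_s^{s+1} ξ` for all
`t > 0, σ ≥ 0`, the unit averages of `ξ` are uniformly bounded and tend to `0` at
infinity, then `ν(t) → 0` as `t → ∞`. -/
theorem stmt8 (μ Cμ CR : ℝ) (hμ : 0 < μ) (hCμ : 0 < Cμ) (ν ξ : ℝ → ℝ)
    (hν : ∀ t, 0 ≤ t → 0 ≤ ν t) (hξ : ∀ t, 0 ≤ t → 0 ≤ ξ t)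
    (hξint : ∀ a b : ℝ, IntervalIntegrable ξ MeasureTheory.volume a b)
    (hineq : ∀ t σ : ℝ, 0 < t → 0 ≤ σ →
      ν (t + σ) ≤ Real.exp (-μ * t) * ν σ
        + Cμ * sSup ((fun s => ∫ τ in s..(s + 1), ξ τ) '' Set.Ioo σ (t + σ)))
    (hbd : ∀ t : ℝ, 0 < t → (∫ τ in t..(t + 1), ξ τ) ≤ CR)
    (hto0 : Filter.Tendsto (fun t => ∫ τ in t..(t + 1), ξ τ) Filter.atTop (𝓝 0)) :
    Filter.Tendsto ν Filter.atTop (𝓝 0) :=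
  stmt8_general μ Cμ hμ hCμ ν ξ hν hineq hto0
end

section
/- Let μ, γ > 0 and ν = min{μ, γ}. Suppose y : [0,∞) → [0,∞) satisfies y(t) ≤ e^{-μ(t-σ)} y(σ) + C sup_{σ<τ<t} η(τ) for all 0 ≤ σ < t, where η(t) ≤ C' e^{-γ t}. Then there is a constant C'' such that y(t) ≤ C'' e^{-ν' t} for every ν' < ν; in particular y(t) = O(e^{-ν' t}) as t → ∞ for each ν' < ν. -/
open Real Set

/-!
Writing `D = C C'`, the hypotheses give the recursion
`y t ≤ e^{-μ(t-σ)} y σ + D e^{-γσ}` for `0 ≤ σ < t`. Taking `σ = 0` shows that `y` is bounded.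
Fix `θ ∈ [0, 1)` with `ν' ≤ γθ` and take `σ = θt`: a bound `y ≤ A e^{-κ t}` improves to
`y ≤ (A + D) e^{-κ' t}` for any `κ' ≤ min (μ(1-θ) + θκ) (γθ)`. Starting from `κ = 0`, the rates
`min (μ(1-θⁿ)) ν'` are admissible at every step, and they equal `ν'` once `θⁿ` is small.
-/

section ExpRecursion

variable {y : ℝ → ℝ} {μ γ D : ℝ}

theorem le_add_of_exp_recursion (hμ : 0 ≤ μ) (hy0 : 0 ≤ y 0) (hD : 0 ≤ D)
    (hrec : ∀ σ t, 0 ≤ σ → σ < t → y t ≤ exp (-μ * (t - σ)) * y σ + D * exp (-γ * σ))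
    {t : ℝ} (ht : 0 ≤ t) : y t ≤ y 0 + D := by
  rcases ht.eq_or_lt with rfl | ht
  · linarith
  · have hdecay : exp (-μ * (t - 0)) ≤ 1 := exp_le_one_iff.2 (by nlinarith)
    calc y t ≤ exp (-μ * (t - 0)) * y 0 + D * exp (-γ * 0) := hrec 0 t le_rfl ht
      _ ≤ 1 * y 0 + D := by rw [mul_zero, exp_zero, mul_one]; gcongr
      _ = y 0 + D := by rw [one_mul]

theorem exp_recursion_bootstrap (hy0 : 0 ≤ y 0) (hD : 0 ≤ D)
    (hrec : ∀ σ t, 0 ≤ σ → σ < t → y t ≤ exp (-μ * (t - σ)) * y σ + D * exp (-γ * σ))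
    {θ κ κ' A : ℝ} (hθ0 : 0 ≤ θ) (hθ1 : θ < 1)
    (hκμ : κ' ≤ μ * (1 - θ) + θ * κ) (hκγ : κ' ≤ γ * θ)
    (hA : ∀ t, 0 ≤ t → y t ≤ A * exp (-κ * t)) {t : ℝ} (ht : 0 ≤ t) :
    y t ≤ (A + D) * exp (-κ' * t) := by
  have hA0 : 0 ≤ A := hy0.trans (by simpa using hA 0 le_rfl)
  rcases ht.eq_or_lt with rfl | ht
  · simpa using (hA 0 le_rfl).trans (by simpa using hD)
  · have hθt : θ * t < t := by nlinarith
    calc y t ≤ exp (-μ * (t - θ * t)) * y (θ * t) + D * exp (-γ * (θ * t)) :=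
          hrec _ _ (by positivity) hθt
      _ ≤ exp (-μ * (t - θ * t)) * (A * exp (-κ * (θ * t))) + D * exp (-γ * (θ * t)) := by
          gcongr; exact hA _ (by positivity)
      _ = A * exp (-(μ * (1 - θ) + θ * κ) * t) + D * exp (-(γ * θ) * t) := by
          rw [mul_left_comm, ← exp_add]; ring_nf
      _ ≤ A * exp (-κ' * t) + D * exp (-κ' * t) := by gcongr
      _ = (A + D) * exp (-κ' * t) := by ring

theorem exists_le_mul_exp_of_exp_recursion (hμ : 0 < μ) (hγ : 0 < γ) (hy0 : 0 ≤ y 0)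
    (hD : 0 ≤ D)
    (hrec : ∀ σ t, 0 ≤ σ → σ < t → y t ≤ exp (-μ * (t - σ)) * y σ + D * exp (-γ * σ))
    {ν' : ℝ} (hν' : ν' < min μ γ) : ∃ A, ∀ t, 0 ≤ t → y t ≤ A * exp (-ν' * t) := by
  have hνμ : ν' < μ := hν'.trans_le (min_le_left _ _)
  have hνγ : ν' < γ := hν'.trans_le (min_le_right _ _)
  set θ := max (ν' / γ) 0
  have hθ0 : 0 ≤ θ := le_max_right _ _
  have hθ1 : θ < 1 := max_lt ((div_lt_one hγ).2 hνγ) zero_lt_one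
  have hγθ : ν' ≤ γ * θ := by
    calc ν' = γ * (ν' / γ) := by field_simp
      _ ≤ γ * θ := by gcongr; exact le_max_left _ _
  have hrate : ∀ n : ℕ,
      min (μ * (1 - θ ^ (n + 1))) ν' ≤ μ * (1 - θ) + θ * min (μ * (1 - θ ^ n)) ν' := by
    intro n
    rcases le_total (μ * (1 - θ ^ n)) ν' with h | h
    · rw [min_eq_left h]
      exact (min_le_left _ _).trans (le_of_eq (by ring))
    · rw [min_eq_right h]
      exact (min_le_right _ _).trans
        (by nlinarith [mul_nonneg (sub_nonneg.2 hνμ.le) (sub_nonneg.2 hθ1.le)])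
  have hiter : ∀ n : ℕ, ∃ A, ∀ t, 0 ≤ t → y t ≤ A * exp (-min (μ * (1 - θ ^ n)) ν' * t) := by
    intro n
    induction n with
    | zero =>
      refine ⟨y 0 + D, fun t ht => (le_add_of_exp_recursion hμ.le hy0 hD hrec ht).trans ?_⟩
      refine le_mul_of_one_le_right (by positivity) (one_le_exp ?_)
      have : min (μ * (1 - θ ^ 0)) ν' ≤ 0 := (min_le_left _ _).trans (by simp)
      nlinarith
    | succ n ih =>
      obtain ⟨A, hA⟩ := ih
      exact ⟨A + D, fun t ht => exp_recursion_bootstrap hy0 hD hrec hθ0 hθ1 (hrate n)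
        ((min_le_right _ _).trans hγθ) hA ht⟩
  obtain ⟨n, hn⟩ := exists_pow_lt_of_lt_one (div_pos (sub_pos.2 hνμ) hμ) hθ1
  have hmin : min (μ * (1 - θ ^ n)) ν' = ν' := by
    have := (lt_div_iff₀ hμ).1 hn
    exact min_eq_right (by nlinarith)
  simpa only [hmin] using hiter n

end ExpRecursion

theorem stmt14_general (μ γ C C' : ℝ) (hμ : 0 < μ) (hγ : 0 < γ) (hC : 0 ≤ C) (hC' : 0 ≤ C')
    (y η : ℝ → ℝ)
    (hy : ∀ t, 0 ≤ t → 0 ≤ y t)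
    (hineq : ∀ σ t : ℝ, 0 ≤ σ → σ < t →
      y t ≤ Real.exp (-μ * (t - σ)) * y σ + C * sSup (η '' Set.Ioo σ t))
    (hηdecay : ∀ t, 0 ≤ t → η t ≤ C' * Real.exp (-γ * t)) :
    ∀ ν' : ℝ, ν' < min μ γ →
      ∃ C'' : ℝ, ∀ t, 0 ≤ t → y t ≤ C'' * Real.exp (-ν' * t) := by
  intro ν' hν'
  refine exists_le_mul_exp_of_exp_recursion hμ hγ (hy 0 le_rfl) (mul_nonneg hC hC')
    (fun σ t hσ hσt => ?_) hν'
  have hsup : sSup (η '' Ioo σ t) ≤ C' * exp (-γ * σ) := by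
    refine csSup_le ((nonempty_Ioo.2 hσt).image η) (forall_mem_image.2 fun τ hτ => ?_)
    calc η τ ≤ C' * exp (-γ * τ) := hηdecay τ (hσ.trans hτ.1.le)
      _ ≤ C' * exp (-γ * σ) := by gcongr _ * exp ?_; nlinarith [hτ.1]
  calc y t ≤ exp (-μ * (t - σ)) * y σ + C * sSup (η '' Ioo σ t) := hineq σ t hσ hσt
    _ ≤ exp (-μ * (t - σ)) * y σ + C * (C' * exp (-γ * σ)) := by gcongr
    _ = exp (-μ * (t - σ)) * y σ + C * C' * exp (-γ * σ) := by ring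

/-- abstract decay lemma. If `y ≥ 0` satisfies
`y(t) ≤ e^{-μ(t-σ)} y(σ) + C sup_{σ<τ<t} η(τ)` for all `0 ≤ σ < t`, and
`η(t) ≤ C' e^{-γ t}`, then for every `ν' < ν = min{μ,γ}` there is `C''` with
`y(t) ≤ C'' e^{-ν' t}` for all `t ≥ 0`. -/
theorem stmt14 (μ γ C C' : ℝ) (hμ : 0 < μ) (hγ : 0 < γ) (hC : 0 ≤ C) (hC' : 0 ≤ C')
    (y η : ℝ → ℝ)
    (hy : ∀ t, 0 ≤ t → 0 ≤ y t) (hη : ∀ t, 0 ≤ t → 0 ≤ η t)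
    (hineq : ∀ σ t : ℝ, 0 ≤ σ → σ < t →
      y t ≤ Real.exp (-μ * (t - σ)) * y σ + C * sSup (η '' Set.Ioo σ t))
    (hηdecay : ∀ t, 0 ≤ t → η t ≤ C' * Real.exp (-γ * t)) :
    ∀ ν' : ℝ, ν' < min μ γ →
      ∃ C'' : ℝ, ∀ t, 0 ≤ t → y t ≤ C'' * Real.exp (-ν' * t) :=
  stmt14_general μ γ C C' hμ hγ hC hC' y η hy hineq hηdecay
end

section
/- Let k_ε : ℝ → ℝ be nondecreasing with k_ε ≥ 0 and k_ε(s) = 1 for s ≤ 0, and let u, v : Ω → ℝ be in H¹₀(Ω) with |∇v| ≤ G a.e., where G ≥ 0 is measurable. Then, pointwise a.e. in Ω, (k_ε(|∇u|² - G²) ∇u - ∇v) · (∇u - ∇v) ≥ 0; in particular, if both integrals are finite, ∫_Ω ∇v · ∇(v - u) ≥ ∫_Ω k_ε(|∇u|² - G²) ∇u · ∇(v - u). -/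
open MeasureTheory Set

lemma key17 {E : Type*} [NormedAddCommGroup E] [InnerProductSpace ℝ E]
    (k : ℝ → ℝ) (hkmono : Monotone k) (hknn : ∀ s, 0 ≤ k s)
    (hkone : ∀ s, s ≤ 0 → k s = 1) {p q : E} {c : ℝ} (hq : ‖q‖ ^ 2 ≤ c) :
    0 ≤ (inner ℝ (k (‖p‖ ^ 2 - c) • p - q) (p - q) : ℝ) := by
  set a := k (‖p‖ ^ 2 - c) with ha_def
  have hpq : (inner ℝ p q : ℝ) ≤ ‖p‖ * ‖q‖ := real_inner_le_norm p q
  have expand : (inner ℝ (a • p - q) (p - q) : ℝ)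
      = a * ‖p‖ ^ 2 - (a + 1) * inner ℝ p q + ‖q‖ ^ 2 := by
    simp [inner_sub_left, inner_sub_right, inner_smul_left, real_inner_comm q p,
      real_inner_self_eq_norm_sq]
    ring
  rw [expand]
  have ha : 0 ≤ a := hknn _
  rcases le_or_gt ‖q‖ ‖p‖ with h | h
  · have h1 : 1 ≤ a := by
      have h2 := hkmono (show ‖q‖ ^ 2 - c ≤ ‖p‖ ^ 2 - c by
        nlinarith [norm_nonneg p, norm_nonneg q])
      rw [hkone _ (by linarith)] at h2
      exact h2
    have h3 : 0 ≤ (‖p‖ - ‖q‖) * (a * ‖p‖ - ‖q‖) := by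
      apply mul_nonneg (by linarith)
      nlinarith [norm_nonneg p, norm_nonneg q]
    have h4 : (a + 1) * inner ℝ p q ≤ (a + 1) * (‖p‖ * ‖q‖) :=
      mul_le_mul_of_nonneg_left hpq (by linarith)
    nlinarith [norm_nonneg p, norm_nonneg q]
  · have h1 : a = 1 := hkone _ (by nlinarith [norm_nonneg q, norm_nonneg p])
    rw [h1]
    nlinarith [sq_nonneg (‖p‖ - ‖q‖)]

/-- monotonicity of the penalization: with `k_ε ≥ 0` nondecreasing and
`k_ε(s) = 1` for `s ≤ 0`, and `|∇v| ≤ G` a.e. (`G ≥ 0`), one has pointwise a.e.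
`(k_ε(|∇u|² - G²)∇u - ∇v)·(∇u - ∇v) ≥ 0`, and consequently
`∫ ∇v·∇(v-u) ≥ ∫ k_ε(|∇u|² - G²) ∇u·∇(v-u)` when both integrals are finite.
Gradients of `u, v` are the functions `gu, gv`. -/
theorem stmt17 {α : Type*} [MeasurableSpace α] (μ : Measure α) {N : ℕ}
    (k : ℝ → ℝ) (hkmono : Monotone k) (hknn : ∀ s, 0 ≤ k s)
    (hkone : ∀ s, s ≤ 0 → k s = 1)
    (G : α → ℝ) (hGnn : ∀ᵐ x ∂μ, 0 ≤ G x)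
    (gu gv : α → EuclideanSpace ℝ (Fin N))
    (hv : ∀ᵐ x ∂μ, ‖gv x‖ ≤ G x)
    (hint1 : Integrable (fun x => (inner ℝ (gv x) (gv x - gu x) : ℝ)) μ)
    (hint2 : Integrable
      (fun x => k (‖gu x‖ ^ 2 - G x ^ 2) * (inner ℝ (gu x) (gv x - gu x) : ℝ)) μ) :
    (∀ᵐ x ∂μ,
      0 ≤ (inner ℝ (k (‖gu x‖ ^ 2 - G x ^ 2) • gu x - gv x) (gu x - gv x) : ℝ)) ∧
    ∫ x, k (‖gu x‖ ^ 2 - G x ^ 2) * (inner ℝ (gu x) (gv x - gu x) : ℝ) ∂μ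
      ≤ ∫ x, (inner ℝ (gv x) (gv x - gu x) : ℝ) ∂μ := by
  have hae : ∀ᵐ x ∂μ,
      0 ≤ (inner ℝ (k (‖gu x‖ ^ 2 - G x ^ 2) • gu x - gv x) (gu x - gv x) : ℝ) := by
    filter_upwards [hv, hGnn] with x hvx hGx
    exact key17 k hkmono hknn hkone (by nlinarith [norm_nonneg (gv x)])
  refine ⟨hae, ?_⟩
  refine integral_mono_ae hint2 hint1 ?_
  filter_upwards [hae] with x hx
  set a := k (‖gu x‖ ^ 2 - G x ^ 2)
  have h2 : (inner ℝ (a • gu x - gv x) (gu x - gv x) : ℝ)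
      = inner ℝ (gv x) (gv x - gu x) - a * inner ℝ (gu x) (gv x - gu x) := by
    simp [inner_sub_left, inner_sub_right, inner_smul_left, real_inner_comm (gv x) (gu x)]
    ring
  rw [h2] at hx
  linarith
end
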